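/- Let X₁ and X₂ be metric spaces, each of which contains a geodesic ray. Then the ℓ¹ product X₁ × X₂ is not Gromov hyperbolic: there is no δ ≥ 0 such that for all points x, y, z, t of the ℓ¹ product, the Gromov product satisfies (x,z)_t ≥ min((x,y)_t, (y,z)_t) − δ. -/
import Mathlib

/-- If the metric spaces `X₁` and `X₂` each contain a geodesic ray, then the ℓ¹ product
`X₁ × X₂` is not Gromov hyperbolic: there is no `δ ≥ 0` such that the Gromov product
satisfies `(x,z)_t ≥ min ((x,y)_t) ((y,z)_t) - δ` for all points `x y z t`. -/
theorem product_not_gromov_hyperbolic {X₁ X₂ : Type*} [MetricSpace X₁] [MetricSpace X₂]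
    (γ₁ : ℝ → X₁) (hγ₁ : ∀ s t : ℝ, 0 ≤ s → 0 ≤ t → dist (γ₁ s) (γ₁ t) = |s - t|)
    (γ₂ : ℝ → X₂) (hγ₂ : ∀ s t : ℝ, 0 ≤ s → 0 ≤ t → dist (γ₂ s) (γ₂ t) = |s - t|) :
    ¬ ∃ δ : ℝ, 0 ≤ δ ∧ ∀ x y z t : WithLp 1 (X₁ × X₂),
        min ((dist t x + dist t y - dist x y) / 2) ((dist t y + dist t z - dist y z) / 2) - δ ≤
          (dist t x + dist t z - dist x z) / 2 := by
  rintro ⟨δ, hδ, h⟩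
  set r : ℝ := δ + 1 with hr
  have hr0 : (0:ℝ) ≤ r := by linarith
  have hr2 : (0:ℝ) ≤ 2*r := by linarith
  have key := h (WithLp.equiv 1 _ |>.symm (γ₁ (2*r), γ₂ 0))
    (WithLp.equiv 1 _ |>.symm (γ₁ r, γ₂ r))
    (WithLp.equiv 1 _ |>.symm (γ₁ 0, γ₂ (2*r)))
    (WithLp.equiv 1 _ |>.symm (γ₁ 0, γ₂ 0))
  have hd : ∀ (a b : X₁) (c d : X₂),
      dist ((WithLp.equiv 1 (X₁ × X₂)).symm (a, c)) ((WithLp.equiv 1 (X₁ × X₂)).symm (b, d))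
        = dist a b + dist c d := by
    intro a b c d
    rw [WithLp.prod_dist_eq_add (by norm_num)]
    norm_num
  rw [hd, hd, hd, hd, hd, hd] at key
  rw [hγ₁ 0 (2*r) le_rfl hr2, hγ₁ 0 r le_rfl hr0, hγ₁ 0 0 le_rfl le_rfl,
    hγ₁ (2*r) r hr2 hr0, hγ₁ (2*r) 0 hr2 le_rfl, hγ₁ r 0 hr0 le_rfl,
    hγ₂ 0 (2*r) le_rfl hr2, hγ₂ 0 r le_rfl hr0, hγ₂ 0 0 le_rfl le_rfl,
    hγ₂ r (2*r) hr0 hr2] at key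
  rw [show |(0:ℝ) - 2*r| = 2*r by rw [abs_sub_comm]; simpa using abs_of_nonneg hr2,
    show |(0:ℝ) - r| = r by rw [abs_sub_comm]; simpa using abs_of_nonneg hr0,
    show |(0:ℝ) - 0| = 0 by simp,
    show |2*r - r| = r by rw [show 2*r - r = r by ring]; exact abs_of_nonneg hr0,
    show |2*r - 0| = 2*r by simpa using abs_of_nonneg hr2,
    show |r - 0| = r by simpa using abs_of_nonneg hr0,
    show |r - 2*r| = r by rw [abs_sub_comm, show 2*r - r = r by ring]; exact abs_of_nonneg hr0]
    at key
  rw [min_eq_left (by linarith)] at key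
  linarith
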